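/- arXiv:1502.05816 — 6 statements merged into one kernel-verified Lean document; each statement's English description precedes it below -/
import Mathlib

section
/- Let b, c, λ₁ be positive real numbers, let a be a real number with a ≥ λ₁, and let λ be a complex number satisfying λ² = a·(b·λ − c²) (equivalently, λ²/(b·λ − c²) = a whenever b·λ ≠ c²). Then Re λ ≥ min(b·λ₁/2, c²/b). -/
/-- The scalar computation underlying Lemma 2.3: if `b, c, λ₁ > 0`, `a ≥ λ₁` and the
complex number `λ` satisfies `λ² = a (b λ - c²)`, then `Re λ ≥ min (b λ₁ / 2) (c² / b)`. -/
theorem westervelt_root_real_part_lower_bound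
    (b c lam1 a : ℝ) (hb : 0 < b) (hc : 0 < c) (hlam1 : 0 < lam1) (ha : lam1 ≤ a)
    (lam : ℂ) (hlam : lam ^ 2 = (a : ℂ) * ((b : ℂ) * lam - (c : ℂ) ^ 2)) :
    min (b * lam1 / 2) (c ^ 2 / b) ≤ lam.re := by
  have ha0 : 0 < a := hlam1.trans_le ha
  rw [Complex.ext_iff] at hlam
  obtain ⟨hre, him⟩ := hlam
  simp [pow_two, Complex.mul_re, Complex.mul_im] at hre him
  by_cases hy0 : lam.im = 0
  · rw [hy0] at hre
    have h1 : 0 ≤ a * (b * lam.re - c * c) := by nlinarith [sq_nonneg lam.re]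
    have h2 : 0 ≤ b * lam.re - c * c := nonneg_of_mul_nonneg_right h1 ha0
    have : c ^ 2 / b ≤ lam.re := by rw [div_le_iff₀ hb]; nlinarith
    exact le_trans (min_le_right _ _) this
  · have hxab : lam.re = a * b / 2 := by
      have h := mul_right_cancel₀ hy0
        (show (2 * lam.re) * lam.im = (a * b) * lam.im by nlinarith)
      linarith
    have : b * lam1 / 2 ≤ lam.re := by rw [hxab]; nlinarith
    exact le_trans (min_le_left _ _) this
end

section
/- Let E be a complex Banach space, A : E → E a bounded linear operator, b, c positive real constants, and define the bounded block operator 𝒜 on E × E by 𝒜(u, v) = (−v, c²·A u + b·A v), i.e. the operator matrix [[0, −I], [c²A, bA]]. Let λ ∈ ℂ and suppose the bounded operator T_λ := −λ²·I + (λ·b − c²)·A is invertible with bounded inverse R. Then λ·I − 𝒜 is invertible on E × E and its inverse is given by the block formula (f, g) ↦ ( −R(λ·f − b·A f) + R g , f + λ·R(λ·f − b·A f) − λ·R g ), i.e. (λ − 𝒜)⁻¹ = [[−R(λ − bA), R], [I + λR(λ − bA), −λR]]. -/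
open ContinuousLinearMap

/-- The resolvent formula for the block operator `𝒜 = [[0, -I], [c²A, bA]]` from Section 2
of the paper: if `T_λ = -λ² I + (λ b - c²) A` has a bounded two-sided inverse `R`, then
`λ - 𝒜` is invertible with inverse `[[-R(λ - bA), R], [I + λ R(λ - bA), -λ R]]`. -/
theorem westervelt_block_resolvent_formula
    {E : Type*} [NormedAddCommGroup E] [NormedSpace ℂ E]
    (A : E →L[ℂ] E) (b c : ℝ) (hb : 0 < b) (hc : 0 < c) (lam : ℂ)
    (R : E →L[ℂ] E)
    (hR₁ : R.comp ((-(lam ^ 2)) • ContinuousLinearMap.id ℂ E + (lam * b - (c : ℂ) ^ 2) • A)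
      = ContinuousLinearMap.id ℂ E)
    (hR₂ : ((-(lam ^ 2)) • ContinuousLinearMap.id ℂ E + (lam * b - (c : ℂ) ^ 2) • A).comp R
      = ContinuousLinearMap.id ℂ E) :
    -- the block operator 𝒜(u, v) = (-v, c² A u + b A v)
    let 𝒜 : (E × E) →L[ℂ] (E × E) :=
      (-(ContinuousLinearMap.snd ℂ E E)).prod
        (((c : ℂ) ^ 2 • A).comp (ContinuousLinearMap.fst ℂ E E) +
          ((b : ℂ) • A).comp (ContinuousLinearMap.snd ℂ E E))
    -- the candidate inverse (f, g) ↦ (-R(λf - bAf) + Rg, f + λR(λf - bAf) - λRg)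
    let S : E →L[ℂ] E := R.comp (lam • ContinuousLinearMap.id ℂ E - (b : ℂ) • A)
    let M : (E × E) →L[ℂ] (E × E) :=
      ((-S).comp (ContinuousLinearMap.fst ℂ E E) + R.comp (ContinuousLinearMap.snd ℂ E E)).prod
        (ContinuousLinearMap.fst ℂ E E + (lam • S).comp (ContinuousLinearMap.fst ℂ E E)
          - (lam • R).comp (ContinuousLinearMap.snd ℂ E E))
    M.comp (lam • ContinuousLinearMap.id ℂ (E × E) - 𝒜) = ContinuousLinearMap.id ℂ (E × E) ∧
      (lam • ContinuousLinearMap.id ℂ (E × E) - 𝒜).comp M = ContinuousLinearMap.id ℂ (E × E) := by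
  intro 𝒜 S M
  have h1 : ∀ x : E, (-(lam ^ 2)) • R x + (lam * b - (c : ℂ) ^ 2) • R (A x) = x := by
    intro x
    have := ContinuousLinearMap.ext_iff.mp hR₁ x
    simpa [map_add, map_smul] using this
  have h2 : ∀ x : E, (-(lam ^ 2)) • R x + (lam * b - (c : ℂ) ^ 2) • A (R x) = x := by
    intro x
    have := ContinuousLinearMap.ext_iff.mp hR₂ x
    simpa using this
  constructor
  · apply ContinuousLinearMap.ext
    rintro ⟨f, g⟩
    refine Prod.ext ?_ ?_ <;> simp [M, S, 𝒜, sub_eq_add_neg]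
    · linear_combination (norm := match_scalars) h1 f
      all_goals try simp only [Complex.coe_algebraMap]
      all_goals ring_nf
    · linear_combination (norm := match_scalars) (-lam) • h1 f
      all_goals try simp only [Complex.coe_algebraMap]
      all_goals ring_nf
  · apply ContinuousLinearMap.ext
    rintro ⟨f, g⟩
    refine Prod.ext ?_ ?_ <;> simp [M, S, 𝒜, sub_eq_add_neg]
    · match_scalars
      all_goals try simp only [Complex.coe_algebraMap]
      all_goals ring_nf
    · linear_combination (norm := match_scalars) (-lam) • h2 f + (b : ℂ) • h2 (A f) + h2 g
      all_goals try simp only [Complex.coe_algebraMap]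
      all_goals ring_nf
end

section
/- Let E be a complex Banach space, A : E → E a bounded linear operator, b, c positive real constants, and define the bounded block operator 𝒜 on E × E by 𝒜(u, v) = (−v, c²·A u + b·A v), i.e. the operator matrix [[0, −I], [c²A, bA]]. Let λ ∈ ℂ satisfy b·λ − c² ≠ 0 and μ(λ) := λ²/(b·λ − c²) ∉ σ(A), the spectrum of A. Then λ ∉ σ(𝒜). -/
/-- Sufficiency direction of Lemma 2.2: if `b λ - c² ≠ 0` and
`μ(λ) = λ² / (b λ - c²)` is not in the spectrum of `A`, then `λ` is not in the
spectrum of the block operator `𝒜 = [[0, -I], [c²A, bA]]`. -/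
theorem westervelt_block_spectrum_sufficient
    {E : Type*} [NormedAddCommGroup E] [NormedSpace ℂ E]
    (A : E →L[ℂ] E) (b c : ℝ) (hb : 0 < b) (hc : 0 < c) (lam : ℂ)
    (hne : (b : ℂ) * lam - (c : ℂ) ^ 2 ≠ 0)
    (hres : lam ^ 2 / ((b : ℂ) * lam - (c : ℂ) ^ 2) ∉ spectrum ℂ A) :
    lam ∉ spectrum ℂ
      (((-(ContinuousLinearMap.snd ℂ E E)).prod
        (((c : ℂ) ^ 2 • A).comp (ContinuousLinearMap.fst ℂ E E) +
          ((b : ℂ) • A).comp (ContinuousLinearMap.snd ℂ E E))) : (E × E) →L[ℂ] (E × E)) := by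
  rw [spectrum.notMem_iff] at hres ⊢
  have hne' : lam * (b : ℂ) - (c : ℂ) ^ 2 ≠ 0 := by rwa [mul_comm]
  set μ : ℂ := lam ^ 2 / ((b : ℂ) * lam - (c : ℂ) ^ 2) with hμ
  obtain ⟨U, hU⟩ := hres
  set B : E →L[ℂ] E := (↑U⁻¹ : E →L[ℂ] E) with hBdef
  have hBl : ∀ x : E, B (μ • x - A x) = x := by
    intro x
    have h := congrArg (fun (T : E →L[ℂ] E) => T x) U.inv_mul
    simpa [hU, ContinuousLinearMap.mul_apply, Algebra.algebraMap_eq_smul_one,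
      ContinuousLinearMap.sub_apply, ContinuousLinearMap.smul_apply,
      ContinuousLinearMap.one_apply] using h
  have hBr : ∀ x : E, μ • B x - A (B x) = x := by
    intro x
    have h := congrArg (fun (T : E →L[ℂ] E) => T x) U.mul_inv
    simpa [hU, ContinuousLinearMap.mul_apply, Algebra.algebraMap_eq_smul_one,
      ContinuousLinearMap.sub_apply, ContinuousLinearMap.smul_apply,
      ContinuousLinearMap.one_apply] using h
  set k : ℂ := ((b : ℂ) * lam - (c : ℂ) ^ 2)⁻¹ with hk
  set W : (E × E) →L[ℂ] E :=
    B.comp ((lam • ContinuousLinearMap.fst ℂ E E -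
      ((b : ℂ) • A).comp (ContinuousLinearMap.fst ℂ E E)) - ContinuousLinearMap.snd ℂ E E)
    with hW
  set S : (E × E) →L[ℂ] (E × E) :=
    (k • W).prod (ContinuousLinearMap.fst ℂ E E - lam • (k • W)) with hS
  set T : (E × E) →L[ℂ] (E × E) :=
    ((-(ContinuousLinearMap.snd ℂ E E)).prod
      (((c : ℂ) ^ 2 • A).comp (ContinuousLinearMap.fst ℂ E E) +
        ((b : ℂ) • A).comp (ContinuousLinearMap.snd ℂ E E))) with hT
  have happS : ∀ p : E × E, S p =
      (k • B (lam • p.1 - (b : ℂ) • A p.1 - p.2),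
        p.1 - lam • (k • B (lam • p.1 - (b : ℂ) • A p.1 - p.2))) := by
    intro p
    simp [hS, hW, sub_sub]
  have happT : ∀ p : E × E, T p = (-p.2, (c : ℂ) ^ 2 • A p.1 + (b : ℂ) • A p.2) := by
    intro p
    simp [hT]
  have happM : ∀ p : E × E, (algebraMap ℂ ((E × E) →L[ℂ] (E × E)) lam - T) p =
      (lam • p.1 + p.2, lam • p.2 - ((c : ℂ) ^ 2 • A p.1 + (b : ℂ) • A p.2)) := by
    intro p
    simp [happT p, Algebra.algebraMap_eq_smul_one, Prod.smul_def, sub_eq_add_neg, add_comm]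
  refine ⟨⟨algebraMap ℂ ((E × E) →L[ℂ] (E × E)) lam - T, S, ?_, ?_⟩, rfl⟩
  · -- M * S = 1
    refine ContinuousLinearMap.ext fun p => ?_
    rw [ContinuousLinearMap.mul_apply, ContinuousLinearMap.one_apply, happS p, happM]
    set w : E := lam • p.1 - (b : ℂ) • A p.1 - p.2 with hw
    set z : E := B w with hz
    have hAz : A z = μ • z - w := by
      have h := hBr w
      rw [← hz] at h
      rw [← h]; abel
    refine Prod.ext ?_ ?_
    · show lam • (k • z) + (p.1 - lam • (k • z)) = p.1
      abel
    · show lam • (p.1 - lam • (k • z)) -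
        ((c : ℂ) ^ 2 • A (k • z) + (b : ℂ) • A (p.1 - lam • (k • z))) = p.2
      rw [map_smul, map_sub, map_smul, map_smul, hAz, hw]
      match_scalars <;> (simp only [hμ, hk]; field_simp; try ring)
  · -- S * M = 1
    refine ContinuousLinearMap.ext fun p => ?_
    rw [ContinuousLinearMap.mul_apply, ContinuousLinearMap.one_apply, happM, happS]
    set f : E := lam • p.1 + p.2 with hf
    set g : E := lam • p.2 - ((c : ℂ) ^ 2 • A p.1 + (b : ℂ) • A p.2) with hg
    have hw' : k • (lam • f - (b : ℂ) • A f - g) = μ • p.1 - A p.1 := by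
      rw [hf, hg, map_add, map_smul]
      match_scalars <;> (simp only [hμ, hk]; field_simp; try ring)
    have hfirst : k • B (lam • f - (b : ℂ) • A f - g) = p.1 := by
      rw [← map_smul, hw', hBl]
    refine Prod.ext ?_ ?_
    · exact hfirst
    · show f - lam • (k • B (lam • f - (b : ℂ) • A f - g)) = p.2
      rw [hfirst, hf]; abel
end

section
/- Let E be a complex Banach space, A : E → E a bounded linear operator, b, c positive real constants, and define the bounded block operator 𝒜 on E × E by 𝒜(u, v) = (−v, c²·A u + b·A v), i.e. the operator matrix [[0, −I], [c²A, bA]]. Suppose there is λ₁ > 0 such that every element of the spectrum σ(A) is a real number ≥ λ₁ (i.e. σ(A) ⊆ [λ₁, ∞)). Set λ₀ := min(b·λ₁/2, c²/b). Then every λ ∈ ℂ with Re λ < λ₀ satisfies λ ∉ σ(𝒜); in particular the spectral bound of −𝒜 is at most −λ₀ < 0. -/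
/-!
Writing `𝒜 = [[0, -I], [P, Q]]` with `P = c²A`, `Q = bA`, the equation `(λ - 𝒜)(u, v) = (f, g)`
forces `v = f - λu` and `(λ² - λQ + P) u = λf - Qf - g`, so `λ ∈ ρ(𝒜)` as soon as the
quadratic pencil `λ² - (λb - c²)A` is invertible. Since `λb ≠ c²`, this holds unless
`λ² = (λb - c²)μ` for some `μ ∈ σ(A) ⊆ [λ₁, ∞)`; the imaginary part of that equation gives
`Im λ = 0` or `2 Re λ = bμ ≥ bλ₁`, and for real `λ < c²/b` the real part
`λ² + (c² - λb)μ` is positive.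
-/

namespace ContinuousLinearMap

variable {𝕜 E : Type*} [NontriviallyNormedField 𝕜] [NormedAddCommGroup E] [NormedSpace 𝕜 E]

def quadraticCompanion (P Q : E →L[𝕜] E) : (E × E) →L[𝕜] (E × E) :=
  (-(snd 𝕜 E E)).prod (P.comp (fst 𝕜 E E) + Q.comp (snd 𝕜 E E))

theorem notMem_spectrum_quadraticCompanion {P Q : E →L[𝕜] E} {lam : 𝕜}
    (h : IsUnit (algebraMap 𝕜 (E →L[𝕜] E) (lam ^ 2) - lam • Q + P)) :
    lam ∉ spectrum 𝕜 (quadraticCompanion P Q) := by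
  obtain ⟨S, hS⟩ := h
  set R : E →L[𝕜] E := ↑S⁻¹
  have hSR (y : E) : lam ^ 2 • R y - lam • Q (R y) + P (R y) = y := by
    have h := congrArg (· y) S.mul_inv
    simp only [mul_apply_eq_comp, one_apply_eq_self, hS] at h
    simpa [Algebra.algebraMap_eq_smul_one] using h
  have hRS (x : E) : R (lam ^ 2 • x - lam • Q x + P x) = x := by
    have h := congrArg (· x) S.inv_mul
    simp only [mul_apply_eq_comp, one_apply_eq_self, hS] at h
    simpa [Algebra.algebraMap_eq_smul_one] using h
  have hT (x : E × E) : (algebraMap 𝕜 _ lam - quadraticCompanion P Q) x =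
      (lam • x.1 + x.2, lam • x.2 - (P x.1 + Q x.2)) := by
    simp [quadraticCompanion, Algebra.algebraMap_eq_smul_one, Prod.ext_iff]
  let L : (E × E) →L[𝕜] E := lam • fst 𝕜 E E - Q.comp (fst 𝕜 E E) - snd 𝕜 E E
  let M : (E × E) →L[𝕜] (E × E) := (R.comp L).prod (fst 𝕜 E E - lam • R.comp L)
  rw [spectrum.notMem_iff]
  refine ⟨⟨_, M, ext fun x => ?_, ext fun x => ?_⟩, rfl⟩
  · have hu : lam ^ 2 • R (L x) - lam • Q (R (L x)) + P (R (L x)) = lam • x.1 - Q x.1 - x.2 :=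
      hSR (L x)
    rw [mul_apply_eq_comp, hT, one_apply_eq_self]
    refine Prod.ext ?_ ?_
    · show lam • R (L x) + (x.1 - lam • R (L x)) = x.1
      abel
    · show lam • (x.1 - lam • R (L x)) - (P (R (L x)) + Q (x.1 - lam • R (L x))) = x.2
      rw [map_sub, map_smul]
      linear_combination (norm := module) -hu
  · set y := (algebraMap 𝕜 _ lam - quadraticCompanion P Q) x with hy
    have hL : L y = lam ^ 2 • x.1 - lam • Q x.1 + P x.1 := by
      rw [hy, hT]
      show lam • (lam • x.1 + x.2) - Q (lam • x.1 + x.2) - (lam • x.2 - (P x.1 + Q x.2)) = _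
      rw [map_add, map_smul]
      module
    rw [mul_apply_eq_comp, one_apply_eq_self]
    refine Prod.ext ?_ ?_
    · show R (L y) = x.1
      rw [hL, hRS]
    · show y.1 - lam • R (L y) = x.2
      rw [hL, hRS, hy, hT]
      show lam • x.1 + x.2 - lam • x.1 = x.2
      abel

end ContinuousLinearMap

theorem spectrum.isUnit_algebraMap_sub_smul {𝕜 A : Type*} [Field 𝕜] [Ring A] [Algebra 𝕜 A]
    {a : A} {s t : 𝕜} (ht : t ≠ 0) (h : ∀ z ∈ spectrum 𝕜 a, s ≠ t * z) :
    IsUnit (algebraMap 𝕜 A s - t • a) := by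
  have hs : s / t ∉ spectrum 𝕜 a := fun hz => h _ hz (by field_simp)
  rw [← spectrum.smul_mem_smul_iff (r := Units.mk0 t ht)] at hs
  simpa [Units.smul_def, mul_div_cancel₀ _ ht] using spectrum.notMem_iff.mp hs

theorem Complex.sq_ne_sub_mul_of_re_lt {lam z : ℂ} {b p : ℝ} (hz : z.im = 0) (hz0 : 0 < z.re)
    (hlam_z : 2 * lam.re < b * z.re) (hlam_p : b * lam.re < p) :
    lam ^ 2 ≠ (lam * b - p) * z := by
  intro h
  have hre := congrArg Complex.re h
  have him := congrArg Complex.im h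
  simp only [sq, Complex.mul_re, Complex.mul_im, Complex.sub_re, Complex.sub_im,
    Complex.ofReal_re, Complex.ofReal_im, hz] at hre him
  have : lam.im * (2 * lam.re - b * z.re) = 0 := by linarith
  rcases mul_eq_zero.mp this with hy | hx
  · rw [hy] at hre
    nlinarith [mul_pos hz0 (sub_pos.mpr hlam_p)]
  · linarith

theorem isUnit_westervelt_pencil {𝔸 : Type*} [Ring 𝔸] [Algebra ℂ 𝔸] (a : 𝔸) {b c lam1 : ℝ}
    (hb : 0 < b) (hlam1 : 0 < lam1) (hspec : ∀ z ∈ spectrum ℂ a, z.im = 0 ∧ lam1 ≤ z.re)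
    {lam : ℂ} (hlam_b : 2 * lam.re < b * lam1) (hlam_c : b * lam.re < c ^ 2) :
    IsUnit (algebraMap ℂ 𝔸 (lam ^ 2) - lam • ((b : ℂ) • a) + (c : ℂ) ^ 2 • a) := by
  have hpencil : algebraMap ℂ 𝔸 (lam ^ 2) - lam • ((b : ℂ) • a) + (c : ℂ) ^ 2 • a =
      algebraMap ℂ 𝔸 (lam ^ 2) - (lam * b - ((c ^ 2 : ℝ) : ℂ)) • a := by
    rw [Complex.ofReal_pow, sub_smul, smul_smul]
    abel
  rw [hpencil]
  refine spectrum.isUnit_algebraMap_sub_smul (fun h0 => ?_) fun z hz => ?_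
  · have := congrArg Complex.re h0
    rw [Complex.sub_re, Complex.re_mul_ofReal, Complex.ofReal_re, Complex.zero_re] at this
    linarith
  · obtain ⟨him, hre⟩ := hspec z hz
    exact Complex.sq_ne_sub_mul_of_re_lt him (by linarith)
      (hlam_b.trans_le (mul_le_mul_of_nonneg_left hre hb.le)) hlam_c

/-- Lemma 2.3 of the paper: if the spectrum of `A` is contained in `[λ₁, ∞) ⊆ ℝ` with
`λ₁ > 0`, then every `λ` with `Re λ < λ₀ := min (b λ₁ / 2) (c² / b)` is in the resolvent
set of the block operator `𝒜 = [[0, -I], [c²A, bA]]`; in particular the spectral bound of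
`-𝒜` is at most `-λ₀ < 0`. -/
theorem westervelt_block_spectral_bound
    {E : Type*} [NormedAddCommGroup E] [NormedSpace ℂ E]
    (A : E →L[ℂ] E) (b c lam1 : ℝ) (hb : 0 < b) (hc : 0 < c) (hlam1 : 0 < lam1)
    (hspec : ∀ z ∈ spectrum ℂ A, z.im = 0 ∧ lam1 ≤ z.re) :
    let 𝒜 : (E × E) →L[ℂ] (E × E) :=
      (-(ContinuousLinearMap.snd ℂ E E)).prod
        (((c : ℂ) ^ 2 • A).comp (ContinuousLinearMap.fst ℂ E E) +
          ((b : ℂ) • A).comp (ContinuousLinearMap.snd ℂ E E))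
    let lam0 : ℝ := min (b * lam1 / 2) (c ^ 2 / b)
    (∀ lam : ℂ, lam.re < lam0 → lam ∉ spectrum ℂ 𝒜) ∧
      (∀ z ∈ spectrum ℂ (-𝒜), z.re ≤ -lam0) ∧ -lam0 < 0 := by
  intro 𝒜 lam0
  have hlam0 : 0 < lam0 := lt_min (by positivity) (by positivity)
  have hresolvent (lam : ℂ) (hlam : lam.re < lam0) : lam ∉ spectrum ℂ 𝒜 := by
    have hlam_b : 2 * lam.re < b * lam1 := by linarith [min_le_left (b * lam1 / 2) (c ^ 2 / b)]
    have hlam_c : b * lam.re < c ^ 2 := by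
      have := hlam.trans_le (min_le_right _ _)
      rwa [lt_div_iff₀ hb, mul_comm] at this
    exact ContinuousLinearMap.notMem_spectrum_quadraticCompanion
      (isUnit_westervelt_pencil A hb hlam1 hspec hlam_b hlam_c)
  refine ⟨hresolvent, fun z hz => ?_, by linarith⟩
  rw [← spectrum.neg_eq, Set.mem_neg] at hz
  by_contra! h
  exact hresolvent (-z) (by rw [Complex.neg_re]; linarith) hz
end

section
/- Let k ∈ {2, 3, …} or k = ∞, let T > 0 and J = [0, T], let X and Y be real Banach spaces, and let U be an open subset of X. Suppose S : U → Y is k-times continuously (Fréchet) differentiable on U and each derivative S^{(j)} for j = 2, 3, …, k maps bounded subsets of U into bounded sets. Then the set W := {u ∈ C(J; X) : u(t) ∈ U for all t ∈ J} is open in the Banach space C(J; X) of continuous functions with the supremum norm, and the substitution operator Φ : W → C(J; Y), Φ(u) := S ∘ u, is (k−1)-times continuously (Fréchet) differentiable on W. -/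
/-!
For a compact domain `K`, the image of `u` is compact, so continuity of `F` on an open
neighbourhood of it makes `u ↦ F ∘ u` continuous in the compact-open (= sup-norm) topology, and
the mean value inequality together with the resulting uniform continuity of `F'` near that image
shows that its derivative at `u` is `h ↦ (t ↦ F'(u t) (h t))`. This derivative is the substitution
operator of `F'` followed by a continuous linear map, so induction on the order gives `C^n` for
every `n ≤ k`, in particular `C^{k-1}`.
-/

open Set Metric

section Topological

variable {K X E : Type*} [TopologicalSpace K] [TopologicalSpace X] [TopologicalSpace E] [Zero E]
  {U : Set X} {F : X → E}

open scoped Classical in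
noncomputable def substitution (F : X → E) (u : C(K, X)) : C(K, E) :=
  if h : Continuous (F ∘ u) then ⟨F ∘ u, h⟩ else 0

theorem substitution_apply (hF : ContinuousOn F U) {u : C(K, X)} (hu : ∀ t, u t ∈ U) (t : K) :
    substitution F u t = F (u t) := by
  rw [substitution, dif_pos (hF.comp_continuous u.continuous hu)]
  rfl

variable [CompactSpace K]

theorem ContinuousMap.isOpen_setOf_forall_apply_mem (hU : IsOpen U) :
    IsOpen {u : C(K, X) | ∀ t, u t ∈ U} := by
  simpa only [range_subset_iff] using ContinuousMap.isOpen_setOfPred_range_subset (X := K) hU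

theorem continuousOn_substitution (hU : IsOpen U) (hF : ContinuousOn F U) :
    ContinuousOn (substitution F : C(K, X) → C(K, E)) {u | ∀ t, u t ∈ U} := by
  intro u hu
  refine (ContinuousMap.tendsto_nhds_compactOpen.2 fun L hL V hV hmaps => ?_).mono_left
    nhdsWithin_le_nhds
  have hO : IsOpen (U ∩ F ⁻¹' V) := hF.isOpen_inter_preimage hU hV
  have huO : MapsTo u L (U ∩ F ⁻¹' V) := fun t ht =>
    ⟨hu t, by simpa only [mem_preimage, substitution_apply hF hu] using hmaps ht⟩
  filter_upwards [(ContinuousMap.isOpen_setOf_forall_apply_mem hU).mem_nhds hu,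
    ContinuousMap.eventually_mapsTo hL hO huO] with v hvU hvO t ht
  rw [substitution_apply hF hvU]
  exact (hvO ht).2

end Topological

theorem exists_forall_dist_lt_of_continuousOn {K X E : Type*} [TopologicalSpace K]
    [CompactSpace K] [NormedAddCommGroup X] [PseudoMetricSpace E] [Zero E] {U : Set X}
    {G : X → E} (hU : IsOpen U) (hG : ContinuousOn G U) {u : C(K, X)} (hu : ∀ t, u t ∈ U) {ε : ℝ} (hε : 0 < ε) :
    ∃ δ > 0, ∀ t x, dist x (u t) < δ → x ∈ U ∧ dist (G x) (G (u t)) < ε := by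
  have hW := ContinuousMap.isOpen_setOf_forall_apply_mem (K := K) hU
  have hcont := (continuousOn_substitution hU hG).continuousAt (hW.mem_nhds hu)
  obtain ⟨δ, hδ, hball⟩ := Metric.eventually_nhds_iff.1 <|
    (hW.eventually_mem hu).and (hcont.eventually (ball_mem_nhds _ hε))
  refine ⟨δ, hδ, fun t x hx => ?_⟩
  -- shift `u` by the constant `x - u t` to move `u t` to `x`
  set w := u + ContinuousMap.const K (x - u t)
  have hwt : w t = x := by simp [w]
  have hwu : dist w u < δ := by
    refine lt_of_le_of_lt ((ContinuousMap.dist_le dist_nonneg).2 fun s => ?_) hx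
    simp [w, dist_eq_norm]
  obtain ⟨hwU, hwG⟩ := hball hwu
  refine ⟨hwt ▸ hwU t, ?_⟩
  calc dist (G x) (G (u t)) = dist (substitution G w t) (substitution G u t) := by
        rw [substitution_apply hG hwU, substitution_apply hG hu, hwt]
    _ ≤ dist (substitution G w) (substitution G u) := ContinuousMap.dist_apply_le_dist t
    _ < ε := hwG

section Normed

variable {K X E : Type*} [TopologicalSpace K] [CompactSpace K]
  [NormedAddCommGroup X] [NormedSpace ℝ X] [NormedAddCommGroup E] [NormedSpace ℝ E]
  {U : Set X}

variable (K X E) in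
noncomputable def pointwiseApply : C(K, X →L[ℝ] E) →L[ℝ] C(K, X) →L[ℝ] C(K, E) :=
  LinearMap.mkContinuous₂
    (LinearMap.mk₂ ℝ (fun (g : C(K, X →L[ℝ] E)) (h : C(K, X)) =>
      (⟨fun t => g t (h t), by fun_prop⟩ : C(K, E)))
      (fun _ _ _ => by ext; simp) (fun _ _ _ => by ext; simp)
      (fun _ _ _ => by ext; simp) (fun _ _ _ => by ext; simp))
    1 fun g h => by
      rw [one_mul, ContinuousMap.norm_le _ (by positivity)]
      intro t
      calc ‖g t (h t)‖ ≤ ‖g t‖ * ‖h t‖ := (g t).le_opNorm (h t)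
        _ ≤ ‖g‖ * ‖h‖ := by gcongr <;> exact ContinuousMap.norm_coe_le_norm _ t

@[simp]
theorem pointwiseApply_apply (g : C(K, X →L[ℝ] E)) (h : C(K, X)) (t : K) :
    pointwiseApply K X E g h t = g t (h t) := rfl

theorem hasFDerivAt_substitution (hU : IsOpen U) {F : X → E} (hF : ContDiffOn ℝ 1 F U)
    {u : C(K, X)} (hu : ∀ t, u t ∈ U) :
    HasFDerivAt (substitution F) (pointwiseApply K X E (substitution (fderiv ℝ F) u)) u := by
  have hF' : ContinuousOn (fderiv ℝ F) U := hF.continuousOn_fderiv_of_isOpen hU le_rfl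
  rw [hasFDerivAt_iff_isLittleO_nhds_zero, Asymptotics.isLittleO_iff]
  intro c hc
  obtain ⟨δ, hδ, hnear⟩ := exists_forall_dist_lt_of_continuousOn hU hF' hu hc
  filter_upwards [ball_mem_nhds (0 : C(K, X)) hδ] with v hv
  rw [mem_ball_zero_iff] at hv
  have hball : ∀ t, ∀ x ∈ ball (u t) δ, x ∈ U := fun t x hx => (hnear t x hx).1
  have hvt : ∀ t, u t + v t ∈ ball (u t) δ := fun t => by
    simpa using (v.norm_coe_le_norm t).trans_lt hv
  have huv : ∀ t, (u + v) t ∈ U := fun t => hball t _ (hvt t)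
  rw [ContinuousMap.norm_le _ (by positivity)]
  intro t
  simp only [ContinuousMap.sub_apply, pointwiseApply_apply, ContinuousMap.add_apply,
    substitution_apply hF.continuousOn huv, substitution_apply hF.continuousOn hu,
    substitution_apply hF' hu]
  have hmv := (convex_ball (u t) δ).norm_image_sub_le_of_norm_fderiv_le'
    (fun x hx => (hF.differentiableOn one_ne_zero).differentiableAt (hU.mem_nhds (hball t x hx)))
    (fun x hx => by simpa [dist_eq_norm] using (hnear t x hx).2.le) (mem_ball_self hδ) (hvt t)
  rw [add_sub_cancel_left] at hmv
  exact hmv.trans (by gcongr; exact v.norm_coe_le_norm t)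

end Normed

universe uK uX uE

-- `fderiv` raises the universe of the target, so the induction runs in `Type (max uX uE)`.
theorem contDiffOn_substitution_of_univ_max {K : Type uK} [TopologicalSpace K] [CompactSpace K]
    {X : Type uX} [NormedAddCommGroup X] [NormedSpace ℝ X] {U : Set X} (hU : IsOpen U) (n : ℕ) :
    ∀ {E : Type (max uX uE)} [NormedAddCommGroup E] [NormedSpace ℝ E] {F : X → E},
      ContDiffOn ℝ n F U →
      ContDiffOn ℝ n (substitution F : C(K, X) → C(K, E)) {u | ∀ t, u t ∈ U} := by
  induction n with
  | zero =>
    intro E _ _ F hF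
    exact contDiffOn_zero.2 (continuousOn_substitution hU hF.continuousOn)
  | succ n ih =>
    intro E _ _ F hF
    have hderiv : ∀ u ∈ {u : C(K, X) | ∀ t, u t ∈ U},
        HasFDerivAt (substitution F) (pointwiseApply K X E (substitution (fderiv ℝ F) u)) u :=
      fun u hu => hasFDerivAt_substitution hU (hF.of_le (by simp)) hu
    rw [Nat.cast_succ, contDiffOn_succ_iff_fderiv_of_isOpen
      (ContinuousMap.isOpen_setOf_forall_apply_mem hU)]
    refine ⟨fun u hu => (hderiv u hu).differentiableAt.differentiableWithinAt, by simp, ?_⟩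
    have hF' : ContDiffOn ℝ n (fderiv ℝ F) U := hF.fderiv_of_isOpen hU (by simp)
    exact ((pointwiseApply K X E).contDiff.comp_contDiffOn (ih hF')).congr
      fun u hu => (hderiv u hu).fderiv.trans rfl

theorem contDiffOn_substitution {K : Type uK} [TopologicalSpace K] [CompactSpace K]
    {X : Type uX} [NormedAddCommGroup X] [NormedSpace ℝ X]
    {E : Type uE} [NormedAddCommGroup E] [NormedSpace ℝ E] {U : Set X} (hU : IsOpen U)
    {n : ℕ∞} {F : X → E} (hF : ContDiffOn ℝ n F U) :
    ContDiffOn ℝ n (substitution F : C(K, X) → C(K, E)) {u | ∀ t, u t ∈ U} := by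
  refine contDiffOn_iff_forall_nat_le.2 fun m hm => ?_
  let down : ULift.{uX} E ≃L[ℝ] E := ContinuousLinearEquiv.ulift
  have hup : ContDiffOn ℝ m (down.symm ∘ F) U :=
    down.symm.contDiff.comp_contDiffOn (hF.of_le (mod_cast hm))
  refine ((down : ULift E →L[ℝ] E).compLeftContinuous ℝ K).contDiff.comp_contDiffOn
    (contDiffOn_substitution_of_univ_max hU m hup) |>.congr fun u hu => ?_
  ext t
  simp [substitution_apply hF.continuousOn hu,
    substitution_apply (down.symm.continuous.comp_continuousOn hF.continuousOn) hu]

open Bornology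

theorem substitution_operator_smooth_general
    {X Y : Type*} [NormedAddCommGroup X] [NormedSpace ℝ X]
    [NormedAddCommGroup Y] [NormedSpace ℝ Y]
    (k : ℕ∞) (T : ℝ)
    (U : Set X) (hU : IsOpen U) (S : X → Y)
    (hS : ContDiffOn ℝ k S U) :
    IsOpen {u : C(Set.Icc (0 : ℝ) T, X) | ∀ t, u t ∈ U} ∧
    ∃ Φ : C(Set.Icc (0 : ℝ) T, X) → C(Set.Icc (0 : ℝ) T, Y),
      (∀ u : C(Set.Icc (0 : ℝ) T, X), (∀ t, u t ∈ U) → ∀ t, Φ u t = S (u t)) ∧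
      ContDiffOn ℝ (k - 1) Φ {u : C(Set.Icc (0 : ℝ) T, X) | ∀ t, u t ∈ U} :=
  ⟨ContinuousMap.isOpen_setOf_forall_apply_mem hU, substitution S,
    fun _ hu => substitution_apply hS.continuousOn hu,
    (contDiffOn_substitution hU hS).of_le tsub_le_self⟩

/-- Lemma 3.2 of the paper: if `S : U → Y` is `C^k` (`2 ≤ k ≤ ∞`) on an open set `U ⊆ X` and
each derivative `S⁽ʲ⁾`, `2 ≤ j ≤ k`, maps bounded sets into bounded sets, then the set
`W = {u ∈ C(J; X) : u(J) ⊆ U}` is open in `C(J; X)` (`J = [0, T]` compact, sup norm) and the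
substitution operator `u ↦ S ∘ u : W → C(J; Y)` is of class `C^{k-1}`. -/
theorem substitution_operator_smooth
    {X Y : Type*} [NormedAddCommGroup X] [NormedSpace ℝ X]
    [NormedAddCommGroup Y] [NormedSpace ℝ Y]
    (k : ℕ∞) (hk : 2 ≤ k) (T : ℝ) (hT : 0 < T)
    (U : Set X) (hU : IsOpen U) (S : X → Y)
    (hS : ContDiffOn ℝ k S U)
    (hbdd : ∀ j : ℕ, 2 ≤ j → (j : ℕ∞) ≤ k → ∀ s ⊆ U, IsBounded s →
      IsBounded (iteratedFDerivWithin ℝ j S U '' s)) :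
    IsOpen {u : C(Set.Icc (0 : ℝ) T, X) | ∀ t, u t ∈ U} ∧
    ∃ Φ : C(Set.Icc (0 : ℝ) T, X) → C(Set.Icc (0 : ℝ) T, Y),
      (∀ u : C(Set.Icc (0 : ℝ) T, X), (∀ t, u t ∈ U) → ∀ t, Φ u t = S (u t)) ∧
      ContDiffOn ℝ (k - 1) Φ {u : C(Set.Icc (0 : ℝ) T, X) | ∀ t, u t ∈ U} :=
  substitution_operator_smooth_general k T U hU S hS
end

section
/- Let (Ω, μ) be a measure space, p ∈ [1, ∞) a real exponent, and k > 0 a real constant. Set U := {u ∈ L^∞(Ω, μ; ℝ) : ‖u‖_{L^∞} < 1/(2k)}. Then for every (u, v) ∈ U × L^{2p}(Ω, μ; ℝ) the function x ↦ 2·v(x)²/(1 − 2k·u(x)) defines an element F(u, v) of L^p(Ω, μ; ℝ), and the map F : U × L^{2p}(Ω, μ; ℝ) → L^p(Ω, μ; ℝ) is infinitely Fréchet differentiable (of class C^∞) on the open set U × L^{2p}. -/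
open MeasureTheory ENNReal

namespace WesterveltAux
variable {Ω : Type*} [MeasurableSpace Ω] {μ : Measure Ω}

noncomputable def hMul {a b c : ℝ≥0∞} (h : 1/c = 1/a + 1/b)
    (f : Lp ℝ a μ) (g : Lp ℝ b μ) : Lp ℝ c μ :=
  MemLp.toLp (⇑f • ⇑g) ((Lp.memLp g).smul (Lp.memLp f) (hpqr := ⟨by simpa only [one_div] using h.symm⟩))

lemma coeFn_hMul {a b c : ℝ≥0∞} (h : 1/c = 1/a + 1/b) (f : Lp ℝ a μ) (g : Lp ℝ b μ) :
    ⇑(hMul h f g) =ᵐ[μ] fun x => f x * g x :=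
  MemLp.coeFn_toLp _

lemma norm_hMul_le {a b c : ℝ≥0∞} (h : 1/c = 1/a + 1/b) (f : Lp ℝ a μ) (g : Lp ℝ b μ) :
    ‖hMul h f g‖ ≤ ‖f‖ * ‖g‖ := by
  rw [hMul, Lp.norm_toLp, Lp.norm_def, Lp.norm_def, ← ENNReal.toReal_mul]
  exact ENNReal.toReal_mono
    (ENNReal.mul_ne_top (Lp.eLpNorm_ne_top f) (Lp.eLpNorm_ne_top g))
    (eLpNorm_smul_le_mul_eLpNorm (Lp.aestronglyMeasurable g) (Lp.aestronglyMeasurable f)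
      (hpqr := ⟨by simpa only [one_div] using h.symm⟩))

lemma top_eq : (1 : ℝ≥0∞)/⊤ = 1/⊤ + 1/⊤ := by simp

noncomputable instance : Mul (Lp ℝ (⊤ : ℝ≥0∞) μ) := ⟨fun f g => hMul top_eq f g⟩

lemma coeFn_mul (f g : Lp ℝ (⊤ : ℝ≥0∞) μ) : ⇑(f * g) =ᵐ[μ] fun x => f x * g x :=
  coeFn_hMul top_eq f g

noncomputable instance : One (Lp ℝ (⊤ : ℝ≥0∞) μ) :=
  ⟨MemLp.toLp (fun _ => (1:ℝ)) (memLp_top_const 1)⟩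

lemma coeFn_one : ⇑(1 : Lp ℝ (⊤ : ℝ≥0∞) μ) =ᵐ[μ] fun _ => (1:ℝ) :=
  MemLp.coeFn_toLp _

noncomputable instance : CommRing (Lp ℝ (⊤ : ℝ≥0∞) μ) :=
  { (inferInstance : AddCommGroup (Lp ℝ (⊤ : ℝ≥0∞) μ)) with
    mul := (· * ·)
    one := 1
    mul_assoc := fun a b c => Lp.ext <| by
      filter_upwards [coeFn_mul (a * b) c, coeFn_mul a b, coeFn_mul a (b * c),
        coeFn_mul b c] with x h1 h2 h3 h4
      simp only [h1, h2, h3, h4]; ring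
    one_mul := fun a => Lp.ext <| by
      filter_upwards [coeFn_mul 1 a, coeFn_one (μ := μ)] with x h1 h2
      simp [h1, h2]
    mul_one := fun a => Lp.ext <| by
      filter_upwards [coeFn_mul a 1, coeFn_one (μ := μ)] with x h1 h2
      simp [h1, h2]
    left_distrib := fun a b c => Lp.ext <| by
      filter_upwards [coeFn_mul a (b + c), coeFn_mul a b, coeFn_mul a c,
        Lp.coeFn_add (a * b) (a * c), Lp.coeFn_add b c] with x h1 h2 h3 h4 h5
      simp only [h1, h4, Pi.add_apply, h2, h3, h5]; ring
    right_distrib := fun a b c => Lp.ext <| by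
      filter_upwards [coeFn_mul (a + b) c, coeFn_mul a c, coeFn_mul b c,
        Lp.coeFn_add (a * c) (b * c), Lp.coeFn_add a b] with x h1 h2 h3 h4 h5
      simp only [h1, h4, Pi.add_apply, h2, h3, h5]; ring
    zero_mul := fun a => Lp.ext <| by
      filter_upwards [coeFn_mul 0 a, Lp.coeFn_zero (E := ℝ) (p := (⊤ : ℝ≥0∞)) (μ := μ)]
        with x h1 h2
      simp only [h1, h2, Pi.zero_apply, zero_mul]
    mul_zero := fun a => Lp.ext <| by
      filter_upwards [coeFn_mul a 0, Lp.coeFn_zero (E := ℝ) (p := (⊤ : ℝ≥0∞)) (μ := μ)]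
        with x h1 h2
      simp only [h1, h2, Pi.zero_apply, mul_zero]
    mul_comm := fun a b => Lp.ext <| by
      filter_upwards [coeFn_mul a b, coeFn_mul b a] with x h1 h2
      simp only [h1, h2]; ring }

noncomputable instance : NormedRing (Lp ℝ (⊤ : ℝ≥0∞) μ) :=
  { (inferInstance : NormedAddCommGroup (Lp ℝ (⊤ : ℝ≥0∞) μ)),
    (inferInstance : CommRing (Lp ℝ (⊤ : ℝ≥0∞) μ)) with
    norm_mul_le := fun a b => norm_hMul_le top_eq a b }

noncomputable instance : NormedAlgebra ℝ (Lp ℝ (⊤ : ℝ≥0∞) μ) :=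
  { Algebra.ofModule
      (fun r x y => Lp.ext <| by
        filter_upwards [coeFn_mul (r • x) y, coeFn_mul x y, Lp.coeFn_smul r x,
          Lp.coeFn_smul r (x * y)] with a h1 h2 h3 h4
        simp only [h1, h3, h4, Pi.smul_apply, h2, smul_eq_mul]; ring)
      (fun r x y => Lp.ext <| by
        filter_upwards [coeFn_mul x (r • y), coeFn_mul x y, Lp.coeFn_smul r y,
          Lp.coeFn_smul r (x * y)] with a h1 h2 h3 h4
        simp only [h1, h3, h4, Pi.smul_apply, h2, smul_eq_mul]; ring) with
    norm_smul_le := norm_smul_le }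


lemma isBoundedBilinearMap_hMul {a b c : ℝ≥0∞} [Fact (1 ≤ a)] [Fact (1 ≤ b)] [Fact (1 ≤ c)]
    (h : 1/c = 1/a + 1/b) :
    IsBoundedBilinearMap ℝ (fun z : Lp ℝ a μ × Lp ℝ b μ => hMul h z.1 z.2) where
  add_left f f' g := Lp.ext <| by
    filter_upwards [coeFn_hMul h (f + f') g, coeFn_hMul h f g, coeFn_hMul h f' g,
      Lp.coeFn_add (hMul h f g) (hMul h f' g), Lp.coeFn_add f f'] with x h1 h2 h3 h4 h5
    simp only [h1, h4, Pi.add_apply, h2, h3, h5]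
    ring
  smul_left r f g := Lp.ext <| by
    filter_upwards [coeFn_hMul h (r • f) g, coeFn_hMul h f g,
      Lp.coeFn_smul r (hMul h f g), Lp.coeFn_smul r f] with x h1 h2 h3 h4
    simp only [h1, h3, Pi.smul_apply, h2, h4, smul_eq_mul]
    ring
  add_right f g g' := Lp.ext <| by
    filter_upwards [coeFn_hMul h f (g + g'), coeFn_hMul h f g, coeFn_hMul h f g',
      Lp.coeFn_add (hMul h f g) (hMul h f g'), Lp.coeFn_add g g'] with x h1 h2 h3 h4 h5
    simp only [h1, h4, Pi.add_apply, h2, h3, h5]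
    ring
  smul_right r f g := Lp.ext <| by
    filter_upwards [coeFn_hMul h f (r • g), coeFn_hMul h f g,
      Lp.coeFn_smul r (hMul h f g), Lp.coeFn_smul r g] with x h1 h2 h3 h4
    simp only [h1, h3, Pi.smul_apply, h2, h4, smul_eq_mul]
    ring
  bound := ⟨1, one_pos, fun f g => by simpa using norm_hMul_le h f g⟩


lemma oneDiv_top_add {c : ℝ≥0∞} : (1 : ℝ≥0∞)/c = 1/⊤ + 1/c := by simp

lemma ae_norm_le (u : Lp ℝ (⊤ : ℝ≥0∞) μ) : ∀ᵐ x ∂μ, ‖u x‖ ≤ ‖u‖ := by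
  have h := ae_le_eLpNormEssSup (f := ⇑u) (μ := μ)
  have hne : eLpNormEssSup (⇑u) μ ≠ ⊤ := by
    have := Lp.eLpNorm_ne_top u
    rwa [eLpNorm_exponent_top] at this
  filter_upwards [h] with x hx
  have : ((‖u x‖₊ : ℝ≥0∞)).toReal ≤ (eLpNormEssSup (⇑u) μ).toReal :=
    ENNReal.toReal_mono hne hx
  simpa [Lp.norm_def, eLpNorm_exponent_top] using this

end WesterveltAux

open WesterveltAux in
/-- Step 1 of the proof of Theorem 3.1: the Westervelt nonlinearity
`F(u, v) = 2 v² / (1 - 2 k u)` maps `{u ∈ L^∞ : ‖u‖_∞ < 1/(2k)} × L^{2p}` into `L^p` and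
is a `C^∞` map on this open set. -/
theorem westervelt_nonlinearity_smooth
    {Ω : Type*} [MeasurableSpace Ω] (μ : Measure Ω) (p k : ℝ) (hp : 1 ≤ p) (hk : 0 < k) :
    letI : Fact ((1 : ℝ≥0∞) ≤ ENNReal.ofReal p) := ⟨ENNReal.one_le_ofReal.mpr hp⟩
    letI : Fact ((1 : ℝ≥0∞) ≤ ENNReal.ofReal (2 * p)) :=
      ⟨ENNReal.one_le_ofReal.mpr (by linarith)⟩
    (∀ (u : Lp ℝ (⊤ : ℝ≥0∞) μ) (v : Lp ℝ (ENNReal.ofReal (2 * p)) μ),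
      ‖u‖ < 1 / (2 * k) →
      MemLp (fun x => 2 * (v x) ^ 2 / (1 - 2 * k * (u x))) (ENNReal.ofReal p) μ) ∧
    ∃ F : Lp ℝ (⊤ : ℝ≥0∞) μ × Lp ℝ (ENNReal.ofReal (2 * p)) μ → Lp ℝ (ENNReal.ofReal p) μ,
      (∀ (u : Lp ℝ (⊤ : ℝ≥0∞) μ) (v : Lp ℝ (ENNReal.ofReal (2 * p)) μ),
        ‖u‖ < 1 / (2 * k) →
        (F (u, v) : Ω → ℝ) =ᵐ[μ] fun x => 2 * (v x) ^ 2 / (1 - 2 * k * (u x))) ∧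
      ContDiffOn ℝ (⊤ : ℕ∞) F
        ({u : Lp ℝ (⊤ : ℝ≥0∞) μ | ‖u‖ < 1 / (2 * k)} ×ˢ Set.univ) := by
  letI : Fact ((1 : ℝ≥0∞) ≤ ENNReal.ofReal p) := ⟨ENNReal.one_le_ofReal.mpr hp⟩
  letI : Fact ((1 : ℝ≥0∞) ≤ ENNReal.ofReal (2 * p)) :=
    ⟨ENNReal.one_le_ofReal.mpr (by linarith)⟩
  show (∀ (u : Lp ℝ (⊤ : ℝ≥0∞) μ) (v : Lp ℝ (ENNReal.ofReal (2 * p)) μ),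
      ‖u‖ < 1 / (2 * k) →
      MemLp (fun x => 2 * (v x) ^ 2 / (1 - 2 * k * (u x))) (ENNReal.ofReal p) μ) ∧
    ∃ F : Lp ℝ (⊤ : ℝ≥0∞) μ × Lp ℝ (ENNReal.ofReal (2 * p)) μ → Lp ℝ (ENNReal.ofReal p) μ,
      (∀ (u : Lp ℝ (⊤ : ℝ≥0∞) μ) (v : Lp ℝ (ENNReal.ofReal (2 * p)) μ),
        ‖u‖ < 1 / (2 * k) →
        (F (u, v) : Ω → ℝ) =ᵐ[μ] fun x => 2 * (v x) ^ 2 / (1 - 2 * k * (u x))) ∧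
      ContDiffOn ℝ (⊤ : ℕ∞) F
        ({u : Lp ℝ (⊤ : ℝ≥0∞) μ | ‖u‖ < 1 / (2 * k)} ×ˢ Set.univ)
  have hp0 : (0:ℝ) < p := lt_of_lt_of_le one_pos hp
  -- Hölder exponent identity for the squaring map
  have h2 : (1 : ℝ≥0∞)/(ENNReal.ofReal p)
      = 1/(ENNReal.ofReal (2*p)) + 1/(ENNReal.ofReal (2*p)) := by
    have hP0 : ENNReal.ofReal p ≠ 0 := by
      simp [ENNReal.ofReal_eq_zero, not_le, hp0]
    have hP : ENNReal.ofReal (2*p) = 2 * ENNReal.ofReal p := by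
      rw [ENNReal.ofReal_mul (by norm_num)]
      norm_num
    rw [hP, one_div, one_div, ← two_mul,
      ENNReal.mul_inv (Or.inl (by norm_num)) (Or.inl (by norm_num)), ← mul_assoc,
      ENNReal.mul_inv_cancel (by norm_num) (by norm_num), one_mul]
  -- the map F
  set F : Lp ℝ (⊤ : ℝ≥0∞) μ × Lp ℝ (ENNReal.ofReal (2 * p)) μ → Lp ℝ (ENNReal.ofReal p) μ :=
    fun z => (2:ℝ) • hMul oneDiv_top_add (Ring.inverse (1 - (2*k) • z.1)) (hMul h2 z.2 z.2)
    with hFdef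
  -- representation
  have hrep : ∀ (u : Lp ℝ (⊤ : ℝ≥0∞) μ) (v : Lp ℝ (ENNReal.ofReal (2 * p)) μ),
      ‖u‖ < 1 / (2 * k) →
      (F (u, v) : Ω → ℝ) =ᵐ[μ] fun x => 2 * (v x) ^ 2 / (1 - 2 * k * (u x)) := by
    intro u v hu
    have hδ : 0 < 1 - 2*k*‖u‖ := by
      have h1 : 2*k*‖u‖ < 2*k*(1/(2*k)) :=
        mul_lt_mul_of_pos_left hu (by positivity)
      have h2' : 2*k*(1/(2*k)) = 1 := by field_simp
      linarith
    have hpos : ∀ᵐ x ∂μ, 0 < 1 - 2*k*(u x) := by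
      filter_upwards [ae_norm_le u] with x hx
      have : u x ≤ ‖u‖ := le_trans (le_abs_self _) hx
      nlinarith
    -- the pointwise inverse is in L∞
    have hmeas : AEStronglyMeasurable (fun x => (1 - 2*k*(u x))⁻¹) μ := by
      rw [aestronglyMeasurable_iff_aemeasurable]
      exact (aemeasurable_const.sub
        ((Lp.aestronglyMeasurable u).aemeasurable.const_mul (2*k))).inv
    have hg : MemLp (fun x => (1 - 2*k*(u x))⁻¹) (⊤ : ℝ≥0∞) μ := by
      refine memLp_top_of_bound hmeas (1 - 2*k*‖u‖)⁻¹ ?_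
      filter_upwards [ae_norm_le u, hpos] with x hx hxp
      have hle : 1 - 2*k*‖u‖ ≤ 1 - 2*k*(u x) := by
        have : u x ≤ ‖u‖ := le_trans (le_abs_self _) hx
        nlinarith
      rw [Real.norm_eq_abs, abs_of_pos (inv_pos.mpr hxp)]
      exact inv_anti₀ hδ hle
    set G : Lp ℝ (⊤ : ℝ≥0∞) μ := hg.toLp _ with hGdef
    -- the unit
    have hnorm : ‖(2*k) • u‖ < 1 := by
      rw [norm_smul, Real.norm_eq_abs, abs_of_pos (by positivity : (0:ℝ) < 2*k)]
      have h1 : 2*k*‖u‖ < 2*k*(1/(2*k)) :=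
        mul_lt_mul_of_pos_left hu (by positivity)
      have h2' : 2*k*(1/(2*k)) = 1 := by field_simp
      linarith
    set unit : (Lp ℝ (⊤ : ℝ≥0∞) μ)ˣ := Units.oneSub ((2*k) • u) hnorm with hunit
    have hu1 : ((unit : (Lp ℝ (⊤ : ℝ≥0∞) μ)ˣ) : Lp ℝ (⊤ : ℝ≥0∞) μ) = 1 - (2*k) • u := rfl
    have hzG : ((1 : Lp ℝ (⊤ : ℝ≥0∞) μ) - (2*k) • u) * G = 1 := by
      apply Lp.ext
      filter_upwards [coeFn_mul ((1 : Lp ℝ (⊤ : ℝ≥0∞) μ) - (2*k) • u) G,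
        Lp.coeFn_sub (1 : Lp ℝ (⊤ : ℝ≥0∞) μ) ((2*k) • u), coeFn_one (μ := μ),
        Lp.coeFn_smul (2*k : ℝ) u, hg.coeFn_toLp, hpos] with x hx1 hx2 hx3 hx4 hx5 hx6
      rw [hx1, hx2]
      simp only [Pi.sub_apply, hx3, hx4, Pi.smul_apply, smul_eq_mul]
      rw [hx5]
      exact mul_inv_cancel₀ (ne_of_gt hx6)
    have hGu : G = ((unit⁻¹ : (Lp ℝ (⊤ : ℝ≥0∞) μ)ˣ) : Lp ℝ (⊤ : ℝ≥0∞) μ) := by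
      rw [← hu1] at hzG
      calc G = (((unit⁻¹ : _ˣ) : Lp ℝ (⊤ : ℝ≥0∞) μ) * unit) * G := by
              rw [Units.inv_mul, one_mul]
        _ = ((unit⁻¹ : _ˣ) : Lp ℝ (⊤ : ℝ≥0∞) μ) * ((unit : Lp ℝ (⊤ : ℝ≥0∞) μ) * G) := by
              rw [mul_assoc]
        _ = _ := by rw [hzG, mul_one]
    have hw : Ring.inverse ((1 : Lp ℝ (⊤ : ℝ≥0∞) μ) - (2*k) • u) = G := by
      rw [← hu1, Ring.inverse_unit, hGu]
    have hwg : ⇑(Ring.inverse ((1 : Lp ℝ (⊤ : ℝ≥0∞) μ) - (2*k) • u))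
        =ᵐ[μ] fun x => (1 - 2*k*(u x))⁻¹ := by
      rw [hw]; exact hg.coeFn_toLp
    -- assemble
    filter_upwards [Lp.coeFn_smul (2:ℝ)
        (hMul oneDiv_top_add (Ring.inverse ((1 : Lp ℝ (⊤ : ℝ≥0∞) μ) - (2*k) • u))
          (hMul h2 v v)),
      coeFn_hMul oneDiv_top_add (Ring.inverse ((1 : Lp ℝ (⊤ : ℝ≥0∞) μ) - (2*k) • u))
        (hMul h2 v v),
      coeFn_hMul h2 v v, hwg, hpos] with x hx1 hx2 hx3 hx4 hx5
    show (F (u, v)) x = 2 * (v x) ^ 2 / (1 - 2 * k * (u x))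
    rw [hFdef]
    simp only []
    rw [hx1]
    simp only [Pi.smul_apply, smul_eq_mul]
    rw [hx2, hx3, hx4, div_eq_mul_inv]
    ring
  refine ⟨fun u v hu => (Lp.memLp (F (u, v))).ae_eq (hrep u v hu), F, hrep, ?_⟩
  -- smoothness
  intro z hz
  obtain ⟨hz1, -⟩ := hz
  simp only [Set.mem_setOf_eq] at hz1
  apply ContDiffAt.contDiffWithinAt
  have hnorm : ‖(2*k) • z.1‖ < 1 := by
    rw [norm_smul, Real.norm_eq_abs, abs_of_pos (by positivity : (0:ℝ) < 2*k)]
    have ha : 2*k*‖z.1‖ < 2*k*(1/(2*k)) :=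
      mul_lt_mul_of_pos_left hz1 (by positivity)
    have hb : 2*k*(1/(2*k)) = 1 := by field_simp
    linarith
  have hginv : ContDiffAt ℝ (⊤ : ℕ∞)
      (fun w : Lp ℝ (⊤ : ℝ≥0∞) μ => Ring.inverse ((1 : Lp ℝ (⊤ : ℝ≥0∞) μ) - (2*k) • w)) z.1 := by
    have haff : ContDiff ℝ (⊤ : ℕ∞) (fun w : Lp ℝ (⊤ : ℝ≥0∞) μ => (1 : Lp ℝ (⊤ : ℝ≥0∞) μ) - (2*k) • w) :=
      contDiff_const.sub (contDiff_id.const_smul (2*k : ℝ))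
    have hinv : ContDiffAt ℝ (⊤ : ℕ∞) (Ring.inverse : Lp ℝ (⊤ : ℝ≥0∞) μ → Lp ℝ (⊤ : ℝ≥0∞) μ)
        ((1 : Lp ℝ (⊤ : ℝ≥0∞) μ) - (2*k) • z.1) :=
      contDiffAt_ringInverse ℝ (Units.oneSub ((2*k) • z.1) hnorm)
    exact hinv.comp z.1 haff.contDiffAt
  have hBB1 := isBoundedBilinearMap_hMul (μ := μ)
    (a := (⊤ : ℝ≥0∞)) (b := ENNReal.ofReal p) (c := ENNReal.ofReal p) oneDiv_top_add
  have hBB2 := isBoundedBilinearMap_hMul (μ := μ)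
    (a := ENNReal.ofReal (2*p)) (b := ENNReal.ofReal (2*p)) (c := ENNReal.ofReal p) h2
  have hm : ContDiff ℝ (⊤ : ℕ∞) (fun z : Lp ℝ (⊤ : ℝ≥0∞) μ × Lp ℝ (ENNReal.ofReal (2*p)) μ =>
      hMul h2 z.2 z.2) :=
    hBB2.contDiff.comp (contDiff_snd.prodMk contDiff_snd)
  exact ((hBB1.contDiff.contDiffAt).comp z
    ((hginv.comp z contDiffAt_fst).prodMk hm.contDiffAt)).const_smul (2:ℝ)
end
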